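/- Generalized comparison lemma with a fixed set $Z \subseteq S^*$: define the reduced score $\xi_i = u_i / (1 + \sum_{\ell \in Z} v_\ell)$ for $i \notin Z$. For items $i \in S^*\setminus Z$ and $j \notin S^*$ (with $j \notin Z$), the suboptimality gap satisfies $\Delta_i \le \xi_i - \xi_j$ and $\Delta_i \le \xi_i$. -/

import Mathlib

open Finset

/-!
Since `θ = R(S*)` means `θ = ∑_{ℓ ∈ S*} u_ℓ`, for every assortment `S` one has
`θ - R(S) = (∑_{S*} u - ∑_S u) / (1 + ∑_S v)`. Removing `i` from `S*` leaves the numerator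
`u_i`, and swapping `i` for `j` leaves `u_i - u_j`; both sets are feasible, so these
numerators are nonnegative by optimality of `S*`, and both sets contain `Z`, so their
denominators are at least `1 + ∑_Z v`.
-/

variable {ι : Type*}

noncomputable def mnlRevenue (v r : ι → ℝ) (S : Finset ι) : ℝ :=
  (∑ ℓ ∈ S, v ℓ * r ℓ) / (1 + ∑ ℓ ∈ S, v ℓ)

section

variable {v : ι → ℝ} (hv : ∀ ℓ, 0 ≤ v ℓ)
include hv

lemma one_add_sum_pos (S : Finset ι) : 0 < 1 + ∑ ℓ ∈ S, v ℓ := by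
  have := sum_nonneg fun ℓ (_ : ℓ ∈ S) => hv ℓ
  linarith

lemma sub_mnlRevenue_eq (r : ι → ℝ) (θ : ℝ) (S : Finset ι) :
    θ - mnlRevenue v r S =
      (θ - ∑ ℓ ∈ S, v ℓ * (r ℓ - θ)) / (1 + ∑ ℓ ∈ S, v ℓ) := by
  have hpos := one_add_sum_pos hv S
  rw [mnlRevenue, eq_div_iff hpos.ne', sub_mul, div_mul_cancel₀ _ hpos.ne']
  simp only [mul_sub, sum_sub_distrib, ← sum_mul]
  ring

lemma sum_advantage_eq_of_eq_mnlRevenue {r : ι → ℝ} {θ : ℝ} {S : Finset ι}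
    (hθ : θ = mnlRevenue v r S) : ∑ ℓ ∈ S, v ℓ * (r ℓ - θ) = θ := by
  have h := sub_mnlRevenue_eq hv r θ S
  rw [← hθ, sub_self, eq_comm, div_eq_zero_iff] at h
  rcases h with h | h
  · linarith
  · exact absurd h (one_add_sum_pos hv S).ne'

lemma sub_mnlRevenue_le_div {r : ι → ℝ} {θ : ℝ} {Sstar S Z : Finset ι}
    (hθ : θ = mnlRevenue v r Sstar) (hS : mnlRevenue v r S ≤ θ) (hZS : Z ⊆ S) :
    θ - mnlRevenue v r S ≤
      (∑ ℓ ∈ Sstar, v ℓ * (r ℓ - θ) - ∑ ℓ ∈ S, v ℓ * (r ℓ - θ)) / (1 + ∑ ℓ ∈ Z, v ℓ) := by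
  rw [← sub_nonneg, sub_mnlRevenue_eq hv, le_div_iff₀ (one_add_sum_pos hv S), zero_mul] at hS
  rw [sub_mnlRevenue_eq hv, sum_advantage_eq_of_eq_mnlRevenue hv hθ]
  exact div_le_div_of_nonneg_left hS (one_add_sum_pos hv Z)
    (add_le_add_right (sum_le_sum_of_subset_of_nonneg hZS fun ℓ _ _ => hv ℓ) 1)

end

theorem mnl_gap_le_reduced_score_diff_general
    (N K : ℕ)
    (v r : Fin N → ℝ)
    (hv : ∀ i, v i ∈ Set.Icc (0 : ℝ) 1)
    (R : Finset (Fin N) → ℝ)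
    (hR : ∀ S : Finset (Fin N), R S = (∑ i ∈ S, v i * r i) / (1 + ∑ i ∈ S, v i))
    (Sstar : Finset (Fin N)) (hScard : Sstar.card ≤ K)
    (hopt : ∀ S : Finset (Fin N), S.card ≤ K → R S ≤ R Sstar)
    (θ : ℝ) (hθ : θ = R Sstar)
    (u : Fin N → ℝ) (hu : ∀ ℓ, u ℓ = v ℓ * (r ℓ - θ))
    (Z : Finset (Fin N)) (hZ : Z ⊆ Sstar)
    (ξ : Fin N → ℝ) (hξ : ∀ ℓ, ξ ℓ = u ℓ / (1 + ∑ t ∈ Z, v t))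
    (i j : Fin N) (hi : i ∈ Sstar) (hiZ : i ∉ Z) (hj : j ∉ Sstar)
    (hne : ((univ : Finset (Fin N)).powerset.filter
        (fun S => S.card ≤ K ∧ i ∉ S)).Nonempty)
    (Δi : ℝ)
    (hΔ : Δi = θ - ((univ : Finset (Fin N)).powerset.filter
        (fun S => S.card ≤ K ∧ i ∉ S)).sup' hne R) :
    Δi ≤ ξ i - ξ j ∧ Δi ≤ ξ i := by
  obtain rfl : R = mnlRevenue v r := funext hR
  have hv₀ : ∀ ℓ, 0 ≤ v ℓ := fun ℓ => (hv ℓ).1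
  have hgap : ∀ T, T.card ≤ K → i ∉ T → Z ⊆ T →
      Δi ≤ (∑ ℓ ∈ Sstar, u ℓ - ∑ ℓ ∈ T, u ℓ) / (1 + ∑ ℓ ∈ Z, v ℓ) := fun T hTK hiT hZT => by
    have hΔT : Δi ≤ θ - mnlRevenue v r T :=
      hΔ ▸ sub_le_sub_left (le_sup' _ (by simp [hTK, hiT])) θ
    simpa only [hu] using hΔT.trans (sub_mnlRevenue_le_div hv₀ hθ (hθ ▸ hopt T hTK) hZT)
  have hZA : Z ⊆ Sstar.erase i := fun ℓ hℓ => mem_erase.2 ⟨ne_of_mem_of_not_mem hℓ hiZ, hZ hℓ⟩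
  have hjA : j ∉ Sstar.erase i := fun h => hj (mem_of_mem_erase h)
  have hAK : (Sstar.erase i).card + 1 ≤ K := by rwa [card_erase_add_one hi]
  have hsum : ∑ ℓ ∈ Sstar, u ℓ = u i + ∑ ℓ ∈ Sstar.erase i, u ℓ := (add_sum_erase _ _ hi).symm
  constructor
  · have h := hgap (insert j (Sstar.erase i)) ((card_insert_le _ _).trans hAK)
      (by simp [ne_of_mem_of_not_mem hi hj]) (hZA.trans (subset_insert _ _))
    rwa [sum_insert hjA, hsum, add_sub_add_right_eq_sub, sub_div, ← hξ, ← hξ] at h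
  · have h := hgap (Sstar.erase i) (by omega) (notMem_erase i Sstar) hZA
    rwa [hsum, add_sub_cancel_right, ← hξ] at h

/-- Generalized comparison lemma with a fixed set `Z ⊆ Sstar`.
With reduced scores `ξ ℓ = u ℓ / (1 + ∑ t ∈ Z, v t)`, for `i ∈ Sstar \ Z` and
`j ∉ Sstar` (with `j ∉ Z`), the gap `Δᵢ = θ - max_{|S| ≤ K, i ∉ S} R S`
satisfies `Δᵢ ≤ ξ i - ξ j` and `Δᵢ ≤ ξ i`. -/
theorem mnl_gap_le_reduced_score_diff
    (N K : ℕ) (hK : 0 < K)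
    (v r : Fin N → ℝ)
    (hv : ∀ i, v i ∈ Set.Icc (0 : ℝ) 1) (hr : ∀ i, r i ∈ Set.Icc (0 : ℝ) 1)
    (R : Finset (Fin N) → ℝ)
    (hR : ∀ S : Finset (Fin N), R S = (∑ i ∈ S, v i * r i) / (1 + ∑ i ∈ S, v i))
    (Sstar : Finset (Fin N)) (hScard : Sstar.card ≤ K)
    (hopt : ∀ S : Finset (Fin N), S.card ≤ K → R S ≤ R Sstar)
    (θ : ℝ) (hθ : θ = R Sstar)
    (u : Fin N → ℝ) (hu : ∀ ℓ, u ℓ = v ℓ * (r ℓ - θ))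
    (Z : Finset (Fin N)) (hZ : Z ⊆ Sstar)
    (ξ : Fin N → ℝ) (hξ : ∀ ℓ, ξ ℓ = u ℓ / (1 + ∑ t ∈ Z, v t))
    (i j : Fin N) (hi : i ∈ Sstar) (hiZ : i ∉ Z) (hj : j ∉ Sstar) (hjZ : j ∉ Z)
    (hne : ((univ : Finset (Fin N)).powerset.filter
        (fun S => S.card ≤ K ∧ i ∉ S)).Nonempty)
    (Δi : ℝ)
    (hΔ : Δi = θ - ((univ : Finset (Fin N)).powerset.filter
        (fun S => S.card ≤ K ∧ i ∉ S)).sup' hne R) :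
    Δi ≤ ξ i - ξ j ∧ Δi ≤ ξ i :=
  mnl_gap_le_reduced_score_diff_general N K v r hv R hR Sstar hScard hopt θ hθ u hu Z hZ ξ hξ i j hi
    hiZ hj hne Δi hΔ
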